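/- Let A ∈ ℤ^{m×n} be an integer matrix having n linearly independent rows. Then 1/δ(A) ≤ n·Δ₁·Δ_{n−1} ≤ n·Δ², where Δ₁, Δ_{n−1}, and Δ denote the largest absolute value of any sub-determinant of A of size 1, of size n−1, and of arbitrary size, respectively. -/

import Mathlib

open scoped RealInnerProductSpace BigOperators
open MeasureTheory ProbabilityTheory Matrix

noncomputable section

/-- Identity map from plain vectors to Euclidean space (L2 norm). -/
def toE {n : ℕ} (x : Fin n → ℝ) : EuclideanSpace ℝ (Fin n) := WithLp.toLp 2 x

/-- Identity map from Euclidean space to plain vectors. -/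
def ofE {n : ℕ} (x : EuclideanSpace ℝ (Fin n)) : Fin n → ℝ := x

/-- Normalization N(x) = x / ‖x‖. -/
def nrm {n : ℕ} (x : EuclideanSpace ℝ (Fin n)) : EuclideanSpace ℝ (Fin n) := ‖x‖⁻¹ • x

/-- δ̂(S, v): the norm of the projection of v onto the orthogonal complement of span S,
divided by ‖v‖ (the sine of the angle between v and span S). -/
def deltaHat {n : ℕ} (S : Set (EuclideanSpace ℝ (Fin n))) (v : EuclideanSpace ℝ (Fin n)) : ℝ :=
  ‖(Submodule.orthogonalProjectionOnto ((Submodule.span ℝ S)ᗮ) v : EuclideanSpace ℝ (Fin n))‖ / ‖v‖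

/-- δ(z₁, …, zₙ) = min over k of δ̂({z_i : i ≠ k}, z_k). -/
def deltaVec {n : ℕ} (z : Fin n → EuclideanSpace ℝ (Fin n)) : ℝ :=
  ⨅ k : Fin n, deltaHat (z '' {i | i ≠ k}) (z k)

/-- δ(A) for rows a₁, …, a_m: the minimum of δ over all choices of n linearly
independent rows. -/
def deltaRows {m n : ℕ} (a : Fin m → EuclideanSpace ℝ (Fin n)) : ℝ :=
  sInf { d | ∃ f : Fin n → Fin m, LinearIndependent ℝ (a ∘ f) ∧ d = deltaVec (a ∘ f) }

/-- A vertex of the polyhedron {x : ∀ i, ⟪a i, x⟫ ≤ b i}. -/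
def IsVertex {m n : ℕ} (a : Fin m → EuclideanSpace ℝ (Fin n)) (b : Fin m → ℝ)
    (z : EuclideanSpace ℝ (Fin n)) : Prop :=
  (∀ i, ⟪a i, z⟫ ≤ b i) ∧ Submodule.span ℝ (a '' {i | ⟪a i, z⟫ = b i}) = ⊤

/-- Two distinct vertices are neighboring if n−1 linearly independent constraints are
tight at both. -/
def Neighboring {m n : ℕ} (a : Fin m → EuclideanSpace ℝ (Fin n)) (b : Fin m → ℝ)
    (z₁ z₂ : EuclideanSpace ℝ (Fin n)) : Prop :=
  IsVertex a b z₁ ∧ IsVertex a b z₂ ∧ z₁ ≠ z₂ ∧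
    ∃ s : Finset (Fin m), s.card = n - 1 ∧
      LinearIndependent ℝ (fun i : s => a i) ∧
      ∀ i ∈ s, ⟪a i, z₁⟫ = b i ∧ ⟪a i, z₂⟫ = b i

/-- The largest absolute value of a sub-determinant of size k. -/
def subdetSup {m n : ℕ} (A : Matrix (Fin m) (Fin n) ℝ) (k : ℕ) : ℝ :=
  ⨆ (f : Fin k → Fin m) (_ : Function.Injective f) (g : Fin k → Fin n)
    (_ : Function.Injective g), |(A.submatrix f g).det|

end

/-! Let B be an invertible n × n integer matrix whose rows b₁, …, bₙ are rows of A, and let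
w be the k-th column of adj B. Since B · adj B = det B · 1, w is orthogonal to every bᵢ with
i ≠ k and ⟪b_k, w⟫ = det B, a nonzero integer. If π is the projection onto the orthogonal
complement of the other rows, then 1 ≤ |⟪b_k, w⟫| = |⟪π b_k, w⟫| ≤ ‖π b_k‖ ‖w‖. The entries
of w are (n−1)-minors of A and those of b_k are entries of A, so ‖w‖ ‖b_k‖ ≤ n Δ₁ Δ_{n−1},
that is, δ̂ = ‖π b_k‖ / ‖b_k‖ ≥ 1 / (n Δ₁ Δ_{n−1}).
The second inequality is Δ₁, Δ_{n−1} ≤ Δ; for n = 1 the empty minor gives Δ₀ = 1, which is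
at most Δ₁ because A is a nonzero integer matrix. -/

lemma abs_det_submatrix_le_subdetSup {m n k : ℕ} (A : Matrix (Fin m) (Fin n) ℝ)
    {f : Fin k → Fin m} {g : Fin k → Fin n} (hf : Function.Injective f)
    (hg : Function.Injective g) :
    |(A.submatrix f g).det| ≤ subdetSup A k := by
  unfold subdetSup
  refine le_ciSup_of_le (Set.finite_range _).bddAbove f ?_
  refine le_ciSup_of_le (Set.finite_range _).bddAbove hf ?_
  refine le_ciSup_of_le (Set.finite_range _).bddAbove g ?_
  exact le_ciSup_of_le (Set.finite_range _).bddAbove hg le_rfl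

lemma subdetSup_nonneg {m n : ℕ} (A : Matrix (Fin m) (Fin n) ℝ) (k : ℕ) :
    0 ≤ subdetSup A k :=
  Real.iSup_nonneg fun _ => Real.iSup_nonneg fun _ => Real.iSup_nonneg fun _ =>
    Real.iSup_nonneg fun _ => abs_nonneg _

lemma subdetSup_zero {m n : ℕ} (A : Matrix (Fin m) (Fin n) ℝ) : subdetSup A 0 = 1 := by
  unfold subdetSup
  rw [ciSup_unique, ciSup_pos (Function.injective_of_subsingleton _), ciSup_unique,
    ciSup_pos (Function.injective_of_subsingleton _)]
  simp

lemma abs_le_subdetSup_one {m n : ℕ} (A : Matrix (Fin m) (Fin n) ℝ) (i : Fin m) (j : Fin n) :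
    |A i j| ≤ subdetSup A 1 := by
  simpa using abs_det_submatrix_le_subdetSup A (f := fun _ : Fin 1 => i) (g := fun _ => j)
    (Function.injective_of_subsingleton _) (Function.injective_of_subsingleton _)

lemma abs_adjugate_submatrix_le_subdetSup {m n k : ℕ} (A : Matrix (Fin m) (Fin n) ℝ)
    {f : Fin (k + 1) → Fin m} {g : Fin (k + 1) → Fin n} (hf : Function.Injective f)
    (hg : Function.Injective g) (i j : Fin (k + 1)) :
    |(A.submatrix f g).adjugate i j| ≤ subdetSup A k := by
  rw [adjugate_fin_succ_eq_det_submatrix, abs_mul, abs_pow, abs_neg, abs_one, one_pow, one_mul,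
    submatrix_submatrix]
  exact abs_det_submatrix_le_subdetSup A (hf.comp Fin.succAbove_right_injective)
    (hg.comp Fin.succAbove_right_injective)

lemma subdetSup_le_iSup {m n k : ℕ} (A : Matrix (Fin m) (Fin n) ℝ) (hk₀ : 0 < k)
    (hk : k ≤ min m n) :
    subdetSup A k ≤ ⨆ i : Fin (min m n), subdetSup A (i + 1) :=
  le_ciSup_of_le (Set.finite_range _).bddAbove ⟨k - 1, by omega⟩ <| by
    rw [Nat.sub_add_cancel hk₀]

lemma one_le_subdetSup_one {m n : ℕ} {A : Matrix (Fin m) (Fin n) ℤ} {i : Fin m} {j : Fin n}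
    (hij : A i j ≠ 0) : 1 ≤ subdetSup (A.map ((↑) : ℤ → ℝ)) 1 :=
  calc (1 : ℝ) ≤ |(A i j : ℝ)| := by exact_mod_cast Int.one_le_abs hij
    _ ≤ _ := abs_le_subdetSup_one (A.map ((↑) : ℤ → ℝ)) i j

lemma one_le_abs_det_of_linearIndependent {ι : Type*} [Fintype ι] [DecidableEq ι]
    (B : Matrix ι ι ℤ) (hB : LinearIndependent ℝ (B.map ((↑) : ℤ → ℝ))) :
    1 ≤ |(B.map ((↑) : ℤ → ℝ)).det| := by
  have hdet : (B.map ((↑) : ℤ → ℝ)).det ≠ 0 :=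
    (isUnit_iff_isUnit_det _).mp (linearIndependent_rows_iff_isUnit.mp hB) |>.ne_zero
  rw [← Int.cast_det] at hdet ⊢
  exact_mod_cast Int.one_le_abs (by exact_mod_cast hdet)

lemma norm_toE_le_sqrt_mul {n : ℕ} {x : Fin n → ℝ} {C : ℝ} (hC : 0 ≤ C)
    (hx : ∀ j, |x j| ≤ C) : ‖toE x‖ ≤ √n * C :=
  calc ‖toE x‖ = √(∑ j, x j ^ 2) := by simp [toE, EuclideanSpace.norm_eq]
    _ ≤ √(∑ _j : Fin n, C ^ 2) :=
      Real.sqrt_le_sqrt <| Finset.sum_le_sum fun j _ =>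
        sq_le_sq' (neg_le_of_abs_le (hx j)) (le_of_abs_le (hx j))
    _ = √n * C := by simp [Real.sqrt_mul, Real.sqrt_sq hC]

lemma deltaHat_nonneg {n : ℕ} (S : Set (EuclideanSpace ℝ (Fin n)))
    (v : EuclideanSpace ℝ (Fin n)) :
    0 ≤ deltaHat S v :=
  div_nonneg (norm_nonneg _) (norm_nonneg _)

lemma abs_inner_le_norm_mul_norm_mul_deltaHat {n : ℕ} {S : Set (EuclideanSpace ℝ (Fin n))}
    {v w : EuclideanSpace ℝ (Fin n)} (hw : w ∈ (Submodule.span ℝ S)ᗮ) :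
    |⟪w, v⟫| ≤ ‖w‖ * ‖v‖ * deltaHat S v := by
  rcases eq_or_ne v 0 with rfl | hv
  · simp
  set p : EuclideanSpace ℝ (Fin n) := (Submodule.span ℝ S)ᗮ.orthogonalProjectionOnto v
  have hnorm : ‖v‖ * deltaHat S v = ‖p‖ := mul_div_cancel₀ _ (norm_ne_zero_iff.mpr hv)
  have hinner : ⟪w, v⟫ = ⟪w, p⟫ :=
    (Submodule.inner_orthogonalProjectionOnto_eq_of_mem_left ⟨w, hw⟩ v).symm
  rw [mul_assoc, hnorm, hinner]
  exact abs_real_inner_le_norm w p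

lemma abs_det_le_mul_deltaHat {n : ℕ} (B : Matrix (Fin n) (Fin n) ℝ) (k : Fin n) :
    |B.det| ≤ ‖toE fun j => B.adjugate j k‖ * ‖toE (B k)‖ *
      deltaHat ((fun i => toE (B i)) '' {i | i ≠ k}) (toE (B k)) := by
  set w := toE fun j => B.adjugate j k
  have hinner : ∀ i, ⟪toE (B i), w⟫ = B.det * (1 : Matrix (Fin n) (Fin n) ℝ) i k := by
    intro i
    have h := congr_fun₂ (mul_adjugate B) i k
    rw [mul_apply, Matrix.smul_apply, smul_eq_mul] at h
    rw [← h]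
    simp [w, toE, PiLp.inner_apply, mul_comm]
  have hw : w ∈ (Submodule.span ℝ ((fun i => toE (B i)) '' {i | i ≠ k}))ᗮ := by
    refine (Submodule.mem_orthogonal _ w).mpr fun u hu => ?_
    refine Submodule.span_induction ?_ (by simp) (fun x y _ _ hx hy => ?_) (fun c x _ hx => ?_) hu
    · rintro _ ⟨i, hi, rfl⟩
      rw [hinner, one_apply_ne hi, mul_zero]
    · rw [inner_add_left, hx, hy, add_zero]
    · rw [real_inner_smul_left, hx, mul_zero]
  calc |B.det| = |⟪w, toE (B k)⟫| := by rw [real_inner_comm, hinner, one_apply_eq, mul_one]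
    _ ≤ _ := abs_inner_le_norm_mul_norm_mul_deltaHat hw

lemma le_deltaRows {m n : ℕ} [NeZero n] {a : Fin m → EuclideanSpace ℝ (Fin n)} {c : ℝ}
    (hne : ∃ f : Fin n → Fin m, LinearIndependent ℝ (a ∘ f))
    (h : ∀ f : Fin n → Fin m, LinearIndependent ℝ (a ∘ f) →
      ∀ k, c ≤ deltaHat ((a ∘ f) '' {i | i ≠ k}) (a (f k))) :
    c ≤ deltaRows a := by
  obtain ⟨f, hf⟩ := hne
  refine le_csInf ⟨_, f, hf, rfl⟩ ?_
  rintro _ ⟨f, hf, rfl⟩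
  exact le_ciInf (h f hf)

lemma one_le_mul_deltaHat {m n : ℕ} (A : Matrix (Fin m) (Fin (n + 1)) ℤ)
    {f : Fin (n + 1) → Fin m} (hf : LinearIndependent ℝ fun k => toE fun j => (A (f k) j : ℝ))
    (k : Fin (n + 1)) :
    1 ≤ ((n + 1 : ℕ) : ℝ) * subdetSup (A.map ((↑) : ℤ → ℝ)) 1 *
        subdetSup (A.map ((↑) : ℤ → ℝ)) n *
      deltaHat ((fun i => toE fun j => (A (f i) j : ℝ)) '' {i | i ≠ k})
        (toE fun j => (A (f k) j : ℝ)) := by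
  set AR := A.map ((↑) : ℤ → ℝ)
  set B := AR.submatrix f id
  have hf_inj : Function.Injective f :=
    hf.injective.of_comp (f := fun i => toE fun j => (A i j : ℝ))
  have hB : LinearIndependent ℝ ((A.submatrix f id).map ((↑) : ℤ → ℝ)) :=
    hf.map' (WithLp.linearEquiv 2 ℝ (Fin (n + 1) → ℝ)).toLinearMap (LinearEquiv.ker _)
  have hcol : ‖toE fun j => B.adjugate j k‖ ≤ √((n + 1 : ℕ) : ℝ) * subdetSup AR n :=
    norm_toE_le_sqrt_mul (subdetSup_nonneg AR n) fun j =>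
      abs_adjugate_submatrix_le_subdetSup AR hf_inj Function.injective_id j k
  have hrow : ‖toE (B k)‖ ≤ √((n + 1 : ℕ) : ℝ) * subdetSup AR 1 :=
    norm_toE_le_sqrt_mul (subdetSup_nonneg AR 1) fun j => abs_le_subdetSup_one AR (f k) j
  have hsqrt : √((n + 1 : ℕ) : ℝ) * √((n + 1 : ℕ) : ℝ) = ((n + 1 : ℕ) : ℝ) :=
    Real.mul_self_sqrt (Nat.cast_nonneg _)
  calc (1 : ℝ) ≤ |B.det| := one_le_abs_det_of_linearIndependent _ hB
    _ ≤ ‖toE fun j => B.adjugate j k‖ * ‖toE (B k)‖ *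
          deltaHat ((fun i => toE (B i)) '' {i | i ≠ k}) (toE (B k)) :=
        abs_det_le_mul_deltaHat B k
    _ ≤ (√((n + 1 : ℕ) : ℝ) * subdetSup AR n) * (√((n + 1 : ℕ) : ℝ) * subdetSup AR 1) *
          deltaHat ((fun i => toE (B i)) '' {i | i ≠ k}) (toE (B k)) := by
        gcongr
        · exact deltaHat_nonneg _ _
        · exact mul_nonneg (Real.sqrt_nonneg _) (subdetSup_nonneg AR n)
    _ = √((n + 1 : ℕ) : ℝ) * √((n + 1 : ℕ) : ℝ) * subdetSup AR 1 * subdetSup AR n *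
          deltaHat ((fun i => toE (B i)) '' {i | i ≠ k}) (toE (B k)) := by ring
    _ = _ := by rw [hsqrt]; rfl

lemma one_div_deltaRows_le {m n : ℕ} (A : Matrix (Fin m) (Fin (n + 1)) ℤ)
    (hrank : ∃ f : Fin (n + 1) → Fin m,
      LinearIndependent ℝ fun k => toE fun j => (A (f k) j : ℝ)) :
    1 / deltaRows (fun i => toE fun j => (A i j : ℝ)) ≤
      ((n + 1 : ℕ) : ℝ) * subdetSup (A.map ((↑) : ℤ → ℝ)) 1 *
        subdetSup (A.map ((↑) : ℤ → ℝ)) n := by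
  obtain ⟨f₀, hf₀⟩ := hrank
  set N := ((n + 1 : ℕ) : ℝ) * subdetSup (A.map ((↑) : ℤ → ℝ)) 1 *
    subdetSup (A.map ((↑) : ℤ → ℝ)) n
  have hN : 0 < N :=
    pos_of_mul_pos_left (one_pos.trans_le (one_le_mul_deltaHat A hf₀ 0)) (deltaHat_nonneg _ _)
  have hδ : 1 / N ≤ deltaRows fun i => toE fun j => (A i j : ℝ) :=
    le_deltaRows ⟨f₀, hf₀⟩ fun f hf k => (div_le_iff₀' hN).mpr (one_le_mul_deltaHat A hf k)
  calc 1 / deltaRows (fun i => toE fun j => (A i j : ℝ)) ≤ 1 / (1 / N) :=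
        one_div_le_one_div_of_le (by positivity) hδ
    _ = N := one_div_one_div N

lemma mul_subdetSup_le_mul_sq_iSup {m n : ℕ} (A : Matrix (Fin m) (Fin (n + 1)) ℝ)
    (hm : n + 1 ≤ m) (h₁ : 1 ≤ subdetSup A 1) :
    ((n + 1 : ℕ) : ℝ) * subdetSup A 1 * subdetSup A n ≤
      ((n + 1 : ℕ) : ℝ) * (⨆ k : Fin (min m (n + 1)), subdetSup A (k + 1)) ^ 2 := by
  set Δ := ⨆ k : Fin (min m (n + 1)), subdetSup A (k + 1)
  have hΔ₁ : subdetSup A 1 ≤ Δ := subdetSup_le_iSup A one_pos (by omega)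
  have hΔn : subdetSup A n ≤ Δ := by
    rcases Nat.eq_zero_or_pos n with rfl | hn
    · exact (subdetSup_zero A).trans_le (h₁.trans hΔ₁)
    · exact subdetSup_le_iSup A hn (by omega)
  have hΔ : 0 ≤ Δ := (subdetSup_nonneg A 1).trans hΔ₁
  calc ((n + 1 : ℕ) : ℝ) * subdetSup A 1 * subdetSup A n ≤ ((n + 1 : ℕ) : ℝ) * Δ * Δ := by
        gcongr
        exact subdetSup_nonneg A n
    _ = _ := by ring

/-- For an integer matrix A ∈ ℤ^{m×n} with n linearly independent rows,
1/δ(A) ≤ n·Δ₁·Δ_{n−1} ≤ n·Δ², where Δ₁, Δ_{n−1}, Δ are the largest absolute values of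
sub-determinants of A of size 1, size n−1, and arbitrary size, respectively. -/
theorem stmt5 {m n : ℕ} (hn : 0 < n) (A : Matrix (Fin m) (Fin n) ℤ)
    (hrank : ∃ f : Fin n → Fin m,
      LinearIndependent ℝ fun k => toE fun j => ((A (f k) j : ℝ))) :
    1 / deltaRows (fun i => toE fun j => ((A i j : ℝ))) ≤
        (n : ℝ) * subdetSup (A.map ((↑) : ℤ → ℝ)) 1 * subdetSup (A.map ((↑) : ℤ → ℝ)) (n-1) ∧
      (n : ℝ) * subdetSup (A.map ((↑) : ℤ → ℝ)) 1 * subdetSup (A.map ((↑) : ℤ → ℝ)) (n-1) ≤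
        (n : ℝ) * (⨆ k : Fin (min m n), subdetSup (A.map ((↑) : ℤ → ℝ)) (k + 1)) ^ 2 := by
  obtain ⟨n, rfl⟩ : ∃ n', n = n' + 1 := ⟨n - 1, by omega⟩
  rw [Nat.add_sub_cancel]
  obtain ⟨f, hf⟩ := hrank
  have hf_inj : Function.Injective f :=
    hf.injective.of_comp (f := fun i => toE fun j => (A i j : ℝ))
  have hm : n + 1 ≤ m := by simpa using Fintype.card_le_of_injective f hf_inj
  obtain ⟨j, hj⟩ : ∃ j, A (f 0) j ≠ 0 := by
    by_contra! h
    exact hf.ne_zero 0 (by ext j; simp [toE, h j])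
  exact ⟨one_div_deltaRows_le A ⟨f, hf⟩,
    mul_subdetSup_le_mul_sq_iSup _ hm (one_le_subdetSup_one hj)⟩
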